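/- In the bounded-coordination meta-game, consider the following profile of meta-actions. The large LLM draws x uniformly from {1,…,100} and plays the role-homogeneous pure meta-action instructing roles 1,2,3,4 to play x and role 5 to play x+1 (cyclically, i.e., 101 is identified with 1). The medium LLM draws y uniformly from {1,…,100} and instructs roles 6,7,8,9 to play y. The small LLM draws z uniformly from {1,…,100} and instructs role 10 to play z. Then this profile is a Nash equilibrium of the one-shot meta-game, and the average utilities are Ū^{large} = 9.998, Ū^{medium} = 12.25, and Ū^{small} = 0. In particular, the medium LLM obtains the highest average utility, although it does not have the largest market share. -/

import Mathlib

open Finset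

namespace MetaGame

/-- A mixed action over a finite action set: a probability vector. -/
def Mixed (α : Type) [Fintype α] : Type :=
  {f : α → ℝ // (∀ a, 0 ≤ f a) ∧ ∑ a, f a = 1}

/-- The point-mass (Dirac) mixed action on `a`. -/
noncomputable def Mixed.dirac {α : Type} [Fintype α] [DecidableEq α] (a : α) : Mixed α :=
  ⟨fun b => if b = a then 1 else 0,
    fun b => by by_cases h : b = a <;> simp [h],
    by simp⟩

/-- A finitely supported probability distribution on `α`. -/
structure FinDist (α : Type) where
  support : Finset α
  w : α → ℝ
  nonneg : ∀ x, 0 ≤ w x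
  sum_one : ∑ x ∈ support, w x = 1
  zero_of_not_mem : ∀ x, x ∉ support → w x = 0

/-- The point mass distribution on `x`. -/
noncomputable def FinDist.pure {α : Type} (x : α) : FinDist α := by
  classical
  exact
    { support := {x}
      w := fun y => if y = x then 1 else 0
      nonneg := fun y => by by_cases h : y = x <;> simp [h]
      sum_one := by simp
      zero_of_not_mem := fun y hy => by
        simp only [Finset.mem_singleton] at hy
        simp [hy] }

variable {m k : ℕ} {A : Fin m → Type} [∀ i, Fintype (A i)] [∀ i, DecidableEq (A i)]

/-- Multilinear extension of a payoff function to profiles of mixed actions. -/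
noncomputable def expPay (u : (∀ r : Fin m, A r) → ℝ) (σ : ∀ r, Mixed (A r)) : ℝ :=
  ∑ a : ∀ r : Fin m, A r, (∏ r, (σ r).1 (a r)) * u a

/-- A pure meta-action: a mixed action for each role. -/
abbrev PureMeta (A : Fin m → Type) [∀ i, Fintype (A i)] : Type := ∀ i, Mixed (A i)

/-- The role-homogeneous pure meta-action instructing pure action `a i` in each role `i`. -/
noncomputable def diracProfile (a : ∀ i : Fin m, A i) : PureMeta A := fun i => Mixed.dirac (a i)

/-- Utility of LLM `j` under a profile of pure meta-actions. -/
noncomputable def Upure (u : ∀ i : Fin m, (∀ r : Fin m, A r) → ℝ) (p : Fin m → Fin k → ℝ)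
    (j : Fin k) (M : Fin k → PureMeta A) : ℝ :=
  ∑ i, ∑ g : Fin m → Fin k,
    if g i = j then (∏ r, p r (g r)) * expPay (u i) (fun r => M (g r) r) else 0

/-- Utility of LLM `j` under a profile of (finitely supported, independent) meta-actions. -/
noncomputable def U (u : ∀ i : Fin m, (∀ r : Fin m, A r) → ℝ) (p : Fin m → Fin k → ℝ)
    (Γ : Fin k → FinDist (PureMeta A)) (j : Fin k) : ℝ :=
  ∑ M ∈ Fintype.piFinset (fun j' => (Γ j').support),
    (∏ j', (Γ j').w (M j')) * Upure u p j M

/-- Nash equilibrium of the one-shot meta-game. -/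
def Nash (u : ∀ i : Fin m, (∀ r : Fin m, A r) → ℝ) (p : Fin m → Fin k → ℝ)
    (Γ : Fin k → FinDist (PureMeta A)) : Prop :=
  ∀ (j : Fin k) (Γ' : FinDist (PureMeta A)),
    U u p (Function.update Γ j Γ') j ≤ U u p Γ j

/-- Average utility of the clients governed by LLM `j`. -/
noncomputable def avgU (u : ∀ i : Fin m, (∀ r : Fin m, A r) → ℝ) (p : Fin m → Fin k → ℝ)
    (Γ : Fin k → FinDist (PureMeta A)) (j : Fin k) : ℝ :=
  U u p Γ j / ∑ i, p i j

/-- A meta-action is role-homogeneous if every pure meta-action in its support is a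
tuple of point-mass mixed actions. -/
def RoleHomogeneous (Γ : FinDist (PureMeta A)) : Prop :=
  ∀ M ∈ Γ.support, ∃ a : ∀ i : Fin m, A i, M = diracProfile a


/-- Bounded-coordination payoffs with ten roles and actions `{1,…,100}` (encoded as `Fin 100`):
`W` is the set of roles whose action is chosen by exactly four roles; if `W ≠ ∅` the prize `100`
is split equally among the roles of `W`, otherwise every role receives `0`. -/
noncomputable def bcu (i : Fin 10) (a : ∀ _ : Fin 10, Fin 100) : ℝ :=
  let W : Finset (Fin 10) :=
    Finset.univ.filter (fun r => (Finset.univ.filter (fun r' => a r' = a r)).card = 4)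
  if i ∈ W then 100 / (W.card : ℝ) else 0

/-- Client shares in the bounded-coordination meta-game: the large LLM (`0`) governs all clients
of roles `1,…,5`, the medium LLM (`1`) those of roles `6,…,9`, and the small LLM (`2`) those of
role `10` (roles are `0`-indexed in the formalization). -/
def bcp : Fin 10 → Fin 3 → ℝ := fun i j =>
  if j = 0 then (if (i : ℕ) ≤ 4 then 1 else 0)
  else if j = 1 then (if 5 ≤ (i : ℕ) ∧ (i : ℕ) ≤ 8 then 1 else 0)
  else (if (i : ℕ) = 9 then 1 else 0)

/-- The pure meta-action of the large LLM when it draws `x`: roles `1,…,4` play `x` and role `5`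
plays `x+1` (cyclically). -/
noncomputable def largePure (x : Fin 100) : PureMeta (fun _ : Fin 10 => Fin 100) :=
  fun i => if (i : ℕ) = 4 then Mixed.dirac (x + 1) else Mixed.dirac x

/-- The pure meta-action instructing every role to play `x`. -/
noncomputable def constPure (x : Fin 100) : PureMeta (fun _ : Fin 10 => Fin 100) :=
  fun _ => Mixed.dirac x

end MetaGame

/-!
Every role is governed by exactly one LLM, so `Upure` is the expected total payoff of an LLM's own
roles when every role follows its owner's instruction, and `U` is affine in each LLM's
meta-action. Hence only pure deviations need to be excluded, and against fixed pure instructions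
of the others a deviation earns a convex combination of the payoffs of pure instructions.

Three values cannot each be played by four of the ten roles, so the winners form at most two
groups of four; an LLM with at most three winners next to a rival group of four thus gets at most
`300 / 7`. The small LLM never wins: its value is played by 1, 2, 5, 6 or more roles. Averaged
over the draws of the others, a constant instruction of the medium LLM earns 49; against any other
one the large group wins for all but four draws of the large LLM, and the medium LLM keeps at most
`300 / 7` unless the small LLM joins that group. An instruction of the large LLM in which one value
occurs exactly four times is, up to permuting the large roles, the equilibrium pattern and earns
49.99; for any other one the medium group wins for all but five draws of the medium LLM, and the
large LLM again keeps at most `300 / 7` unless the small LLM joins it.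
-/

namespace MetaGame

lemma Mixed.dirac_apply {α : Type} [Fintype α] [DecidableEq α] (a b : α) :
    (Mixed.dirac a).1 b = if b = a then 1 else 0 := rfl

lemma Mixed.nonneg {α : Type} [Fintype α] (σ : Mixed α) (a : α) : 0 ≤ σ.1 a := σ.2.1 a

lemma Mixed.sum_eq_one {α : Type} [Fintype α] (σ : Mixed α) : ∑ a, σ.1 a = 1 := σ.2.2

lemma Mixed.dirac_injective {α : Type} [Fintype α] [DecidableEq α] :
    Function.Injective (Mixed.dirac : α → Mixed α) := by
  intro a b h
  simpa [Mixed.dirac_apply] using congrArg (fun σ : Mixed α => σ.1 a) h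

section ExpectedPayoff

variable {m : ℕ} {A : Fin m → Type} [∀ i, Fintype (A i)]

lemma sum_prod_mixed (σ : ∀ r, Mixed (A r)) : ∑ a : ∀ r, A r, ∏ r, (σ r).1 (a r) = 1 := by
  simp [← Fintype.prod_sum, Mixed.sum_eq_one]

lemma expPay_const (c : ℝ) (σ : ∀ r, Mixed (A r)) : expPay (fun _ => c) σ = c := by
  rw [expPay, ← sum_mul, sum_prod_mixed, one_mul]

lemma expPay_le {u : (∀ r, A r) → ℝ} {C : ℝ} (h : ∀ a, u a ≤ C) (σ : ∀ r, Mixed (A r)) :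
    expPay u σ ≤ C :=
  calc expPay u σ ≤ expPay (fun _ => C) σ :=
        sum_le_sum fun a _ =>
          mul_le_mul_of_nonneg_left (h a) (prod_nonneg fun r _ => (σ r).nonneg _)
    _ = C := expPay_const C σ

lemma sum_expPay {ι : Type} (s : Finset ι) (u : ι → (∀ r, A r) → ℝ) (σ : ∀ r, Mixed (A r)) :
    ∑ t ∈ s, expPay (u t) σ = expPay (fun a => ∑ t ∈ s, u t a) σ := by
  simp only [expPay, mul_sum]
  exact sum_comm

variable [∀ i, DecidableEq (A i)]

lemma expPay_map (u : (∀ r, A r) → ℝ) (f : ∀ r, A r → A r) (σ τ : ∀ r, Mixed (A r))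
    (hτ : ∀ r b, (τ r).1 b = ∑ x, if f r x = b then (σ r).1 x else 0) :
    expPay u τ = expPay (fun a => u fun r => f r (a r)) σ := by
  have hfiber : ∀ a : ∀ r, A r, (∏ r, (σ r).1 (a r)) * u (fun r => f r (a r)) =
      ∑ b, (∏ r, if f r (a r) = b r then (σ r).1 (a r) else 0) * u b := by
    intro a
    simp_rw [Fintype.prod_ite_zero, ite_mul, zero_mul, ← funext_iff]
    rw [sum_ite_eq]
    simp
  simp only [expPay, hfiber]
  rw [sum_comm]
  refine sum_congr rfl fun b _ => ?_
  rw [← sum_mul]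
  exact congrArg (· * u b) ((prod_congr rfl fun r _ => hτ r (b r)).trans (Fintype.prod_sum _))

lemma expPay_dirac (u : (∀ r, A r) → ℝ) (a : ∀ r, A r) :
    expPay u (fun r => Mixed.dirac (a r)) = u a := by
  rw [expPay_map u (fun r _ => a r) (fun r => Mixed.dirac (a r)), expPay_const]
  intro r b
  by_cases h : a r = b
  · simp [h, Mixed.dirac_apply]
  · simp [h, Mixed.dirac_apply, Ne.symm h]

lemma expPay_of_dirac_off (u : (∀ r, A r) → ℝ) (P : Fin m → Prop) [DecidablePred P]
    (σ τ : ∀ r, Mixed (A r)) (e : ∀ r, A r) (hin : ∀ r, P r → τ r = σ r)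
    (hout : ∀ r, ¬ P r → τ r = Mixed.dirac (e r)) :
    expPay u τ = expPay (fun a => u fun r => if P r then a r else e r) σ := by
  refine expPay_map u (fun r x => if P r then x else e r) σ τ fun r b => ?_
  by_cases hr : P r
  · simp [hr, hin r hr]
  · by_cases h : e r = b
    · simp [hr, hout r hr, h, Mixed.dirac_apply, Mixed.sum_eq_one]
    · simp [hr, hout r hr, h, Mixed.dirac_apply, Ne.symm h]

end ExpectedPayoff

namespace FinDist

variable {P : Type}

noncomputable def expect (D : FinDist P) (f : P → ℝ) : ℝ := ∑ x ∈ D.support, D.w x * f x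

lemma pure_support (x : P) : (FinDist.pure x).support = {x} := rfl

lemma pure_w_self (x : P) : (FinDist.pure x).w x = 1 := by
  simp [FinDist.pure]

lemma expect_pure (x : P) (f : P → ℝ) : (FinDist.pure x).expect f = f x := by
  simp [expect, pure_support, pure_w_self]

lemma expect_le (D : FinDist P) {f : P → ℝ} {C : ℝ} (h : ∀ x, f x ≤ C) : D.expect f ≤ C :=
  calc D.expect f ≤ ∑ x ∈ D.support, D.w x * C :=
        sum_le_sum fun x _ => mul_le_mul_of_nonneg_left (h x) (D.nonneg x)
    _ = C := by rw [← sum_mul, D.sum_one, one_mul]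

lemma expect_uniform {ι : Type} [Fintype ι] [Nonempty ι] (D : FinDist P) {φ : ι → P}
    (hφ : φ.Injective) (hw : ∀ i, D.w (φ i) = 1 / Fintype.card ι) (f : P → ℝ) :
    D.expect f = (∑ i, f (φ i)) / Fintype.card ι := by
  classical
  have hcard : (Fintype.card ι : ℝ) ≠ 0 := by positivity
  have hsub : univ.map ⟨φ, hφ⟩ ⊆ D.support := by
    intro x hx
    obtain ⟨i, -, rfl⟩ := mem_map.1 hx
    by_contra hi
    have := D.zero_of_not_mem _ hi
    simp_all
  have hrest : ∀ x ∈ D.support, x ∉ univ.map ⟨φ, hφ⟩ → D.w x = 0 := by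
    have hsum : ∑ x ∈ univ.map ⟨φ, hφ⟩, D.w x = 1 := by
      simp [hw, hcard]
    have h0 : ∑ x ∈ D.support \ univ.map ⟨φ, hφ⟩, D.w x = 0 := by
      have := sum_sdiff hsub (f := D.w)
      linarith [D.sum_one]
    intro x hx hx'
    exact (sum_eq_zero_iff_of_nonneg fun y _ => D.nonneg y).1 h0 x (mem_sdiff.2 ⟨hx, hx'⟩)
  rw [expect, ← sum_subset hsub fun x hx hx' => by simp [hrest x hx hx'], sum_map]
  simp [hw, div_eq_inv_mul, mul_sum]

end FinDist

section Utility

variable {m k : ℕ} {A : Fin m → Type} [∀ i, Fintype (A i)]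

lemma U_pure (u : Fin m → (∀ r, A r) → ℝ) (p : Fin m → Fin k → ℝ) (M : Fin k → PureMeta A)
    (j : Fin k) : U u p (fun j' => FinDist.pure (M j')) j = Upure u p j M := by
  simp [U, FinDist.pure_support, FinDist.pure_w_self, Fintype.piFinset_singleton]

lemma U_update_eq_expect (u : Fin m → (∀ r, A r) → ℝ) (p : Fin m → Fin k → ℝ)
    (Γ : Fin k → FinDist (PureMeta A)) (j : Fin k) (D : FinDist (PureMeta A)) (j' : Fin k) :
    U u p (Function.update Γ j D) j' =
      D.expect fun M => U u p (Function.update Γ j (FinDist.pure M)) j' := by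
  classical
  unfold U FinDist.expect
  rw [← sum_fiberwise_of_maps_to (g := fun M => M j) (t := D.support)
    (fun M hM => by simpa using Fintype.mem_piFinset.1 hM j)]
  refine sum_congr rfl fun a ha => ?_
  have hsupp : Function.update (fun i => (Function.update Γ j D i).support) j {a} =
      fun i => (Function.update Γ j (FinDist.pure a) i).support := by
    funext i
    by_cases hi : i = j
    · subst hi; simp [FinDist.pure_support]
    · simp [hi]
  have hfiber : {M ∈ Fintype.piFinset fun i => (Function.update Γ j D i).support | M j = a} =
      Fintype.piFinset fun i => (Function.update Γ j (FinDist.pure a) i).support := by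
    rw [← hsupp, Fintype.piFinset_update_singleton_eq_filter_piFinset_eq _ _ (by simpa using ha)]
  rw [hfiber, mul_sum]
  refine sum_congr rfl fun M hM => ?_
  have hMj : M j = a := by simpa [FinDist.pure_support] using Fintype.mem_piFinset.1 hM j
  have hrest : ∀ i ∈ ({j}ᶜ : Finset (Fin k)), (Function.update Γ j D i).w (M i) =
      (Function.update Γ j (FinDist.pure a) i).w (M i) := by
    intro i hi
    simp only [mem_compl, mem_singleton] at hi
    simp [hi]
  rw [Fintype.prod_eq_mul_prod_compl j, Fintype.prod_eq_mul_prod_compl j (fun i => _)]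
  simp only [Function.update_self, hMj, FinDist.pure_w_self, prod_congr rfl hrest]
  ring

lemma nash_of_forall_pure (u : Fin m → (∀ r, A r) → ℝ) (p : Fin m → Fin k → ℝ)
    (Γ : Fin k → FinDist (PureMeta A))
    (h : ∀ j M, U u p (Function.update Γ j (FinDist.pure M)) j ≤ U u p Γ j) : Nash u p Γ :=
  fun j D => (U_update_eq_expect u p Γ j D j).trans_le (D.expect_le (h j))

lemma U_eq_expect (u : Fin m → (∀ r, A r) → ℝ) (p : Fin m → Fin 3 → ℝ)
    (Γ : Fin 3 → FinDist (PureMeta A)) (j : Fin 3) :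
    U u p Γ j = (Γ 0).expect fun a => (Γ 1).expect fun b => (Γ 2).expect fun c =>
      Upure u p j ![a, b, c] := by
  conv_lhs => rw [← Function.update_eq_self 0 Γ, U_update_eq_expect]
  congr 1; funext a
  rw [← Function.update_eq_self 1 (Function.update Γ 0 _), U_update_eq_expect]
  simp only [Function.update_of_ne (show (1 : Fin 3) ≠ 0 by decide)]
  congr 1; funext b
  rw [← Function.update_eq_self 2 (Function.update _ 1 _), U_update_eq_expect]
  simp only [Function.update_of_ne (show (2 : Fin 3) ≠ 0 by decide),
    Function.update_of_ne (show (2 : Fin 3) ≠ 1 by decide)]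
  congr 1; funext c
  rw [← U_pure]
  congr 1; funext i
  fin_cases i <;> rfl

end Utility

section Owners

variable {m k : ℕ} {A : Fin m → Type} [∀ i, Fintype (A i)]

def ownerPayoff (u : Fin m → (∀ r, A r) → ℝ) (own : Fin m → Fin k) (j : Fin k)
    (a : ∀ r, A r) : ℝ :=
  ∑ i with own i = j, u i a

lemma Upure_eq_expPay_ownerPayoff (u : Fin m → (∀ r, A r) → ℝ) (p : Fin m → Fin k → ℝ)
    (own : Fin m → Fin k) (hp : ∀ r j, p r j = if own r = j then 1 else 0) (j : Fin k)
    (M : Fin k → PureMeta A) :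
    Upure u p j M = expPay (ownerPayoff u own j) fun r => M (own r) r := by
  have hprod : ∀ g : Fin m → Fin k, ∏ r, p r (g r) = if ∀ r, own r = g r then 1 else 0 := by
    intro g
    simp_rw [hp]
    convert Fintype.prod_boole (M₀ := ℝ) (p := fun r => own r = g r)
  have hrole : ∀ i, (∑ g : Fin m → Fin k,
      if g i = j then (∏ r, p r (g r)) * expPay (u i) (fun r => M (g r) r) else 0) =
      if own i = j then expPay (u i) (fun r => M (own r) r) else 0 := by
    intro i
    rw [sum_eq_single own]
    · simp [hprod]
    · intro g _ hg
      have : ¬ ∀ r, own r = g r := fun h => hg (funext fun r => (h r).symm)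
      simp [hprod, this]
    · simp
  rw [Upure, show ownerPayoff u own j = fun a : (∀ r, A r) => ∑ i with own i = j, u i a from rfl,
    ← sum_expPay, sum_filter]
  exact sum_congr rfl fun i _ => hrole i

variable [∀ i, DecidableEq (A i)]

lemma Upure_diracProfile (u : Fin m → (∀ r, A r) → ℝ) (p : Fin m → Fin k → ℝ)
    (own : Fin m → Fin k) (hp : ∀ r j, p r j = if own r = j then 1 else 0)
    (b : Fin k → ∀ r, A r) (j : Fin k) :
    Upure u p j (fun i => diracProfile (b i)) = ownerPayoff u own j fun r => b (own r) r := by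
  rw [Upure_eq_expPay_ownerPayoff u p own hp]
  exact expPay_dirac _ _

lemma Upure_update_diracProfile (u : Fin m → (∀ r, A r) → ℝ) (p : Fin m → Fin k → ℝ)
    (own : Fin m → Fin k) (hp : ∀ r j, p r j = if own r = j then 1 else 0)
    (b : Fin k → ∀ r, A r) (j j' : Fin k) (M : PureMeta A) :
    Upure u p j' (Function.update (fun i => diracProfile (b i)) j M) =
      expPay (fun a => ownerPayoff u own j' fun r => if own r = j then a r else b (own r) r) M := by
  rw [Upure_eq_expPay_ownerPayoff u p own hp]
  refine expPay_of_dirac_off _ (fun r => own r = j) _ _ (fun r => b (own r) r) (fun r hr => ?_)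
    fun r hr => ?_
  · simp only [hr, Function.update_self]
  · simp only [Function.update_of_ne hr, diracProfile]

end Owners

section Counting

variable {ι α : Type} [Fintype ι] [DecidableEq α]

def count (a : ι → α) (t : α) : ℕ := #{r | a r = t}

lemma sum_count_le (a : ι → α) (T : Finset α) : ∑ t ∈ T, count a t ≤ Fintype.card ι := by
  simp only [count]
  rw [sum_card_fiberwise_eq_card_filter]
  exact card_filter_le _ _

lemma count_comp_perm (a : ι → α) (π : Equiv.Perm ι) (t : α) : count (a ∘ π) t = count a t :=
  card_equiv π (by simp)

lemma count_vec (a0 a1 a2 a3 a4 a5 a6 a7 a8 a9 t : α) :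
    count ![a0, a1, a2, a3, a4, a5, a6, a7, a8, a9] t =
      (if a0 = t then 1 else 0) + (if a1 = t then 1 else 0) + (if a2 = t then 1 else 0) +
      (if a3 = t then 1 else 0) + (if a4 = t then 1 else 0) + (if a5 = t then 1 else 0) +
      (if a6 = t then 1 else 0) + (if a7 = t then 1 else 0) + (if a8 = t then 1 else 0) +
      (if a9 = t then 1 else 0) := by
  simp only [count, card_filter, Fin.sum_univ_succ, Fin.sum_univ_zero, Matrix.cons_val_zero,
    Matrix.cons_val_succ, add_zero]
  ac_rfl

lemma count_largeDeviation (a0 a1 a2 a3 a4 y z t : α) :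
    count ![a0, a1, a2, a3, a4, y, y, y, y, z] t =
      count ![a0, a1, a2, a3, a4] t + (if y = t then 4 else 0) + (if z = t then 1 else 0) := by
  simp only [count, card_filter, Fin.sum_univ_succ, Fin.sum_univ_zero, Matrix.cons_val_zero,
    Matrix.cons_val_succ]
  by_cases hy : y = t <;> by_cases hz : z = t <;> simp [hy, hz] <;> rfl

lemma count_five_eq_four (a0 a1 a2 a3 a4 v : α) (h : count ![a0, a1, a2, a3, a4] v = 4) :
    (a0 ≠ v ∧ a1 = v ∧ a2 = v ∧ a3 = v ∧ a4 = v) ∨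
    (a0 = v ∧ a1 ≠ v ∧ a2 = v ∧ a3 = v ∧ a4 = v) ∨
    (a0 = v ∧ a1 = v ∧ a2 ≠ v ∧ a3 = v ∧ a4 = v) ∨
    (a0 = v ∧ a1 = v ∧ a2 = v ∧ a3 ≠ v ∧ a4 = v) ∨
    (a0 = v ∧ a1 = v ∧ a2 = v ∧ a3 = v ∧ a4 ≠ v) := by
  simp only [count, card_filter, Fin.sum_univ_succ, Fin.sum_univ_zero, Matrix.cons_val_zero,
    Matrix.cons_val_succ] at h
  by_cases h0 : a0 = v <;> by_cases h1 : a1 = v <;> by_cases h2 : a2 = v <;>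
    by_cases h3 : a3 = v <;> by_cases h4 : a4 = v <;> simp [h0, h1, h2, h3, h4] at h ⊢

end Counting

lemma sum_eq_of_eq_off {α : Type} [Fintype α] [DecidableEq α] {f : α → ℝ} (s : Finset α) (c : ℝ)
    (h : ∀ x ∉ s, f x = c) : ∑ x, f x = ∑ x ∈ s, f x + (Fintype.card α - #s) * c := by
  rw [← sum_add_sum_compl s, sum_congr rfl fun x hx => h x (mem_compl.1 hx), sum_const,
    card_compl, nsmul_eq_mul, Nat.cast_sub (card_le_univ s)]

lemma sum_le_of_le_off {α : Type} [Fintype α] [DecidableEq α] (s : Finset α) {f : α → ℝ}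
    {A B : ℝ} {n : ℕ} (hs : #s ≤ n) (hBA : B ≤ A) (hA : ∀ x ∈ s, f x ≤ A)
    (hB : ∀ x ∉ s, f x ≤ B) : ∑ x, f x ≤ n * A + (Fintype.card α - n) * B := by
  have h1 : ∑ x ∈ s, f x ≤ #s * A := by simpa using sum_le_card_nsmul s f A hA
  have h2 : ∑ x ∈ sᶜ, f x ≤ #sᶜ * B := by
    simpa using sum_le_card_nsmul sᶜ f B fun x hx => hB x (mem_compl.1 hx)
  rw [card_compl, Nat.cast_sub (card_le_univ s)] at h2
  have hs' : (#s : ℝ) ≤ n := by exact_mod_cast hs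
  rw [← sum_add_sum_compl s]
  nlinarith

section BoundedCoordination

def winners (a : Fin 10 → Fin 100) : Finset (Fin 10) := {r | count a (a r) = 4}

lemma mem_winners {a : Fin 10 → Fin 100} {r : Fin 10} : r ∈ winners a ↔ count a (a r) = 4 := by
  simp [winners]

lemma card_winners (a : Fin 10 → Fin 100) :
    #(winners a) = ∑ r, if count a (a r) = 4 then 1 else 0 := by
  rw [winners, card_filter]

lemma bcu_eq (i : Fin 10) (a : Fin 10 → Fin 100) :
    bcu i a = if i ∈ winners a then (100 : ℝ) / #(winners a) else 0 := rfl

lemma sum_bcu_eq (C : Finset (Fin 10)) (a : Fin 10 → Fin 100) :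
    ∑ i ∈ C, bcu i a = #(C ∩ winners a) * ((100 : ℝ) / #(winners a)) := by
  simp only [bcu_eq]
  rw [sum_ite_mem, sum_const, nsmul_eq_mul]

lemma sum_bcu_le_hundred (C : Finset (Fin 10)) (a : Fin 10 → Fin 100) :
    ∑ i ∈ C, bcu i a ≤ 100 := by
  rw [sum_bcu_eq]
  have hK : (#(C ∩ winners a) : ℝ) ≤ #(winners a) := by
    exact_mod_cast card_le_card inter_subset_right
  rcases eq_or_lt_of_le (Nat.cast_nonneg (α := ℝ) #(winners a)) with hW | hW
  · simp [← hW]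
  · rw [mul_div_assoc', div_le_iff₀ hW]
    nlinarith

lemma count_ne_four_of_three {a : Fin 10 → Fin 100} {p q t : Fin 100} (hpq : p ≠ q)
    (hpt : p ≠ t) (hqt : q ≠ t) (hp : count a p = 4) (hq : count a q = 4) : count a t ≠ 4 := by
  intro ht
  have := sum_count_le a {p, q, t}
  rw [sum_insert (by simp [hpq, hpt]), sum_pair hqt, hp, hq, ht] at this
  simp at this

/-- The `K ≤ 3` winners of `C` share the prize with the four players of `t`:
`100 * K / (K + 4) ≤ 300 / 7`. -/
lemma sum_bcu_le_of_rival (C : Finset (Fin 10)) (a : Fin 10 → Fin 100) (t : Fin 100)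
    (ht : count a t = 4) (hC : ∀ i ∈ C, a i ≠ t) (hK : #(C ∩ winners a) ≤ 3) :
    ∑ i ∈ C, bcu i a ≤ 300 / 7 := by
  have hrival : #(C ∩ winners a) + 4 ≤ #(winners a) := by
    have hsub : ({r | a r = t} : Finset (Fin 10)) ⊆ winners a := fun r hr => by
      rw [mem_filter] at hr
      rw [mem_winners, hr.2, ht]
    have hdisj : Disjoint (C ∩ winners a) ({r | a r = t} : Finset (Fin 10)) :=
      disjoint_left.2 fun r hr hr' => hC r (mem_inter.1 hr).1 (mem_filter.1 hr').2
    rw [← ht, count, ← card_union_of_disjoint hdisj]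
    exact card_le_card (union_subset inter_subset_right hsub)
  have hK' : (#(C ∩ winners a) : ℝ) ≤ 3 := by exact_mod_cast hK
  have hW : (#(C ∩ winners a) : ℝ) + 4 ≤ #(winners a) := by exact_mod_cast hrival
  rw [sum_bcu_eq, mul_div_assoc', div_le_div_iff₀ (by linarith) (by norm_num)]
  nlinarith

lemma card_inter_winners_le_three (C : Finset (Fin 10)) (a : Fin 10 → Fin 100) {r₀ : Fin 10}
    (hr₀ : r₀ ∉ C) (hC : ∀ i ∈ C ∩ winners a, a i = a r₀) : #(C ∩ winners a) ≤ 3 := by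
  rcases (C ∩ winners a).eq_empty_or_nonempty with h | ⟨i, hi⟩
  · simp [h]
  have hcount : count a (a r₀) = 4 := by
    rw [← hC i hi]
    exact mem_winners.1 (mem_inter.1 hi).2
  have hsub : insert r₀ (C ∩ winners a) ⊆ ({r | a r = a r₀} : Finset (Fin 10)) := by
    intro r hr
    rcases mem_insert.1 hr with rfl | hr
    · simp
    · simp [hC r hr]
  have := card_le_card hsub
  rw [card_insert_of_notMem fun h => hr₀ (mem_inter.1 h).1] at this
  rw [count] at hcount
  omega

lemma bcu_comp_perm (π : Equiv.Perm (Fin 10)) (a : Fin 10 → Fin 100) (i : Fin 10) :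
    bcu i (a ∘ π) = bcu (π i) a := by
  have hcard : #(winners (a ∘ π)) = #(winners a) :=
    card_equiv π (by simp [mem_winners, count_comp_perm])
  simp only [bcu_eq, mem_winners, count_comp_perm, hcard, Function.comp_apply]

def bcOwner (r : Fin 10) : Fin 3 := if (r : ℕ) ≤ 4 then 0 else if (r : ℕ) ≤ 8 then 1 else 2

lemma bcp_eq (r : Fin 10) (j : Fin 3) : bcp r j = if bcOwner r = j then 1 else 0 := by
  fin_cases r <;> fin_cases j <;> simp [bcp, bcOwner]

lemma bcOwner_filter_zero : ({i | bcOwner i = 0} : Finset (Fin 10)) = {0, 1, 2, 3, 4} := by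
  decide

lemma bcOwner_filter_one : ({i | bcOwner i = 1} : Finset (Fin 10)) = {5, 6, 7, 8} := by
  decide

lemma bcOwner_filter_two : ({i | bcOwner i = 2} : Finset (Fin 10)) = {9} := by
  decide

lemma ownerPayoff_bc_zero (a : Fin 10 → Fin 100) :
    ownerPayoff bcu bcOwner 0 a = bcu 0 a + bcu 1 a + bcu 2 a + bcu 3 a + bcu 4 a := by
  rw [ownerPayoff, bcOwner_filter_zero]
  simp [add_assoc]

lemma ownerPayoff_bc_one (a : Fin 10 → Fin 100) :
    ownerPayoff bcu bcOwner 1 a = bcu 5 a + bcu 6 a + bcu 7 a + bcu 8 a := by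
  rw [ownerPayoff, bcOwner_filter_one]
  simp [add_assoc]

lemma ownerPayoff_bc_two (a : Fin 10 → Fin 100) : ownerPayoff bcu bcOwner 2 a = bcu 9 a := by
  rw [ownerPayoff, bcOwner_filter_two]
  simp

lemma ownerPayoff_bc_le_hundred (j : Fin 3) (a : Fin 10 → Fin 100) :
    ownerPayoff bcu bcOwner j a ≤ 100 :=
  sum_bcu_le_hundred _ a

lemma sum_ownerPayoff_bc_le (j : Fin 3) (a : Fin 100 → Fin 10 → Fin 100) :
    ∑ z, ownerPayoff bcu bcOwner j (a z) ≤ 10000 :=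
  calc ∑ z, ownerPayoff bcu bcOwner j (a z) ≤ ∑ _z : Fin 100, (100 : ℝ) :=
        sum_le_sum fun z _ => ownerPayoff_bc_le_hundred j (a z)
    _ = 10000 := by rw [sum_const, card_univ, Fintype.card_fin, nsmul_eq_mul]; norm_num

lemma ownerPayoff_bc_comp_perm (π : Equiv.Perm (Fin 10)) (hπ : ∀ i, bcOwner (π i) = bcOwner i)
    (j : Fin 3) (a : Fin 10 → Fin 100) :
    ownerPayoff bcu bcOwner j (a ∘ π) = ownerPayoff bcu bcOwner j a := by
  simp only [ownerPayoff, bcu_comp_perm]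
  exact sum_equiv π (by simp [hπ]) fun _ _ => rfl

def bcProfile (x y z : Fin 100) : Fin 10 → Fin 100 := ![x, x, x, x, x + 1, y, y, y, y, z]

lemma largePay_four_one (v w y z : Fin 100) (hw : w ≠ v) :
    ownerPayoff bcu bcOwner 0 ![v, v, v, v, w, y, y, y, y, z] =
      if y = v ∨ z = v then 0 else if y = w ∨ z = y then 100 else 50 := by
  simp only [ownerPayoff_bc_zero, bcu_eq, card_winners, mem_winners, Fin.sum_univ_succ,
    Fin.sum_univ_zero, Matrix.cons_val_zero, Matrix.cons_val_succ, count_vec]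
  rcases eq_or_ne y v with rfl | hyv
  · rcases eq_or_ne z y with rfl | hzy
    · simp [hw, hw.symm]
    rcases eq_or_ne z w with rfl | hzw
    · simp [hw, hw.symm]
    · simp [hw, hw.symm, hzy, hzw]
  rcases eq_or_ne y w with rfl | hyw
  · rcases eq_or_ne z v with rfl | hzv
    · simp [hw, hw.symm]
    rcases eq_or_ne z y with rfl | hzy
    · simp [hw, hw.symm]; norm_num
    · simp [hw, hw.symm, hzv, hzv.symm, hzy, hzy.symm]; norm_num
  rcases eq_or_ne z v with rfl | hzv
  · simp [hw, hw.symm, hyv, hyw]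
  rcases eq_or_ne z y with rfl | hzy
  · simp [hw, hw.symm, hyv, hyv.symm, hyw, hyw.symm]; norm_num
  rcases eq_or_ne z w with rfl | hzw
  · simp [hw, hw.symm, hyv, hyv.symm, hyw, hyw.symm]; norm_num
  · simp [hw, hw.symm, hyv, hyv.symm, hyw, hyw.symm, hzy, hzy.symm, hzv, hzv.symm, hzw, hzw.symm]
    norm_num

lemma mediumPay_bcProfile (x v z : Fin 100) :
    ownerPayoff bcu bcOwner 1 (bcProfile x v z) =
      if x = v ∨ x + 1 = v ∨ z = v then 0 else if z = x then 100 else 50 := by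
  have hx : x + 1 ≠ x := by simp
  simp only [bcProfile, ownerPayoff_bc_one, bcu_eq, card_winners, mem_winners, Fin.sum_univ_succ,
    Fin.sum_univ_zero, Matrix.cons_val_zero, Matrix.cons_val_succ, count_vec]
  rcases eq_or_ne x v with rfl | hxv
  · rcases eq_or_ne z x with rfl | hzx
    · simp [hx]
    · simp [hx, hzx]
  rcases eq_or_ne (x + 1) v with rfl | hxv'
  · rcases eq_or_ne z (x + 1) with rfl | hzx
    · simp [hx.symm]
    · simp [hx.symm, hzx]
  rcases eq_or_ne z v with rfl | hzv
  · simp [hxv, hxv']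
  rcases eq_or_ne z x with rfl | hzx
  · simp [hx, hx.symm, hxv, hxv.symm, hxv', hxv'.symm]; norm_num
  rcases eq_or_ne z (x + 1) with rfl | hzx'
  · simp [hx, hx.symm, hxv, hxv.symm, hxv', hxv'.symm]; norm_num
  · simp [hx, hx.symm, hxv, hxv.symm, hxv', hxv'.symm, hzx, hzx.symm, hzv, hzv.symm, hzx',
      hzx'.symm]
    norm_num

lemma smallPay_bcProfile (x y z : Fin 100) : ownerPayoff bcu bcOwner 2 (bcProfile x y z) = 0 := by
  have hz : count (bcProfile x y z) (bcProfile x y z 9) ≠ 4 := by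
    simp only [bcProfile, count_vec, Matrix.cons_val]
    split_ifs <;> omega
  rw [ownerPayoff_bc_two, bcu_eq, if_neg (mt mem_winners.1 hz)]

lemma sum_largePay_four_one (v w : Fin 100) (hw : w ≠ v) :
    ∑ y, ∑ z, ownerPayoff bcu bcOwner 0 ![v, v, v, v, w, y, y, y, y, z] = 499900 := by
  have hinner : ∀ y, ∑ z, ownerPayoff bcu bcOwner 0 ![v, v, v, v, w, y, y, y, y, z] =
      if y = v then 0 else if y = w then 9900 else 5000 := by
    intro y
    simp only [largePay_four_one v w y _ hw]
    rcases eq_or_ne y v with rfl | hyv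
    · simp
    rcases eq_or_ne y w with rfl | hyw
    · rw [sum_eq_of_eq_off {v} 100 fun z hz => by simp_all]
      simp [hyv]
      norm_num
    · rw [sum_eq_of_eq_off {v, y} 50 fun z hz => by simp_all [not_or]]
      simp [hyv, hyv.symm, hyw, sum_pair hyv.symm]
      norm_num
  rw [sum_congr rfl fun y _ => hinner y,
    sum_eq_of_eq_off {v, w} 5000 fun y hy => by simp_all [not_or]]
  simp [hw, sum_pair hw.symm, card_pair hw.symm]
  norm_num

lemma largePay_eq_of_swap {a b : Fin 10 → Fin 100} (k : Fin 10) (hk : bcOwner k = 0)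
    (h : a = b ∘ Equiv.swap k 4) : ownerPayoff bcu bcOwner 0 a = ownerPayoff bcu bcOwner 0 b := by
  rw [h, ownerPayoff_bc_comp_perm]
  intro i
  rw [Equiv.swap_apply_def]
  split_ifs with h1 h2
  · rw [h1, hk]; rfl
  · rw [h2, hk]; rfl
  · rfl

lemma sum_largePay_of_count_eq_four (a0 a1 a2 a3 a4 v : Fin 100)
    (hv : count ![a0, a1, a2, a3, a4] v = 4) :
    ∑ y, ∑ z, ownerPayoff bcu bcOwner 0 ![a0, a1, a2, a3, a4, y, y, y, y, z] = 499900 := by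
  rcases count_five_eq_four a0 a1 a2 a3 a4 v hv with ⟨h0, h1, h2, h3, h4⟩ | ⟨h0, h1, h2, h3, h4⟩ |
    ⟨h0, h1, h2, h3, h4⟩ | ⟨h0, h1, h2, h3, h4⟩ | ⟨h0, h1, h2, h3, h4⟩
  · rw [h1, h2, h3, h4, ← sum_largePay_four_one v a0 h0]
    exact sum_congr rfl fun y _ => sum_congr rfl fun z _ =>
      largePay_eq_of_swap 0 rfl (by ext r; fin_cases r <;> rfl)
  · rw [h0, h2, h3, h4, ← sum_largePay_four_one v a1 h1]
    exact sum_congr rfl fun y _ => sum_congr rfl fun z _ =>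
      largePay_eq_of_swap 1 rfl (by ext r; fin_cases r <;> rfl)
  · rw [h0, h1, h3, h4, ← sum_largePay_four_one v a2 h2]
    exact sum_congr rfl fun y _ => sum_congr rfl fun z _ =>
      largePay_eq_of_swap 2 rfl (by ext r; fin_cases r <;> rfl)
  · rw [h0, h1, h2, h4, ← sum_largePay_four_one v a3 h3]
    exact sum_congr rfl fun y _ => sum_congr rfl fun z _ =>
      largePay_eq_of_swap 3 rfl (by ext r; fin_cases r <;> rfl)
  · rw [h0, h1, h2, h3]
    exact sum_largePay_four_one v a4 h4

lemma largePay_le_of_forall_count_ne_four (a0 a1 a2 a3 a4 y z : Fin 100)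
    (hno : ∀ t, count ![a0, a1, a2, a3, a4] t ≠ 4)
    (hy : y ∉ ({a0, a1, a2, a3, a4} : Finset (Fin 100))) (hz : z ≠ y) :
    ownerPayoff bcu bcOwner 0 ![a0, a1, a2, a3, a4, y, y, y, y, z] ≤ 300 / 7 := by
  simp only [mem_insert, mem_singleton, not_or] at hy
  obtain ⟨h0, h1, h2, h3, h4⟩ := hy
  have hC : ∀ i ∈ ({i | bcOwner i = 0} : Finset (Fin 10)),
      ![a0, a1, a2, a3, a4, y, y, y, y, z] i ≠ y := by
    intro i hi
    rw [bcOwner_filter_zero] at hi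
    fin_cases hi <;> simp [Ne.symm h0, Ne.symm h1, Ne.symm h2, Ne.symm h3, Ne.symm h4]
  refine sum_bcu_le_of_rival _ _ y ?_ hC
    (card_inter_winners_le_three _ _ (r₀ := 9) (by decide) fun i hi => ?_)
  · rw [count_largeDeviation]
    simp only [count, card_filter, Fin.sum_univ_succ, Fin.sum_univ_zero, Matrix.cons_val_zero,
      Matrix.cons_val_succ]
    simp [Ne.symm h0, Ne.symm h1, Ne.symm h2, Ne.symm h3, Ne.symm h4, hz]
  · obtain ⟨hiC, hiW⟩ := mem_inter.1 hi
    by_contra hiz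
    replace hiz : ![a0, a1, a2, a3, a4, y, y, y, y, z] i ≠ z := hiz
    have hcount := mem_winners.1 hiW
    rw [count_largeDeviation, if_neg (Ne.symm (hC i hiC)), if_neg (Ne.symm hiz)] at hcount
    exact hno _ hcount

lemma sum_largePay_le (a0 a1 a2 a3 a4 : Fin 100) :
    ∑ y, ∑ z, ownerPayoff bcu bcOwner 0 ![a0, a1, a2, a3, a4, y, y, y, y, z] ≤ 499900 := by
  by_cases hfour : ∃ v, count ![a0, a1, a2, a3, a4] v = 4
  · obtain ⟨v, hv⟩ := hfour
    exact (sum_largePay_of_count_eq_four a0 a1 a2 a3 a4 v hv).le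
  simp only [not_exists] at hfour
  have hinner : ∀ y ∉ ({a0, a1, a2, a3, a4} : Finset (Fin 100)),
      ∑ z, ownerPayoff bcu bcOwner 0 ![a0, a1, a2, a3, a4, y, y, y, y, z] ≤
        1 * 100 + (100 - 1) * (300 / 7) := by
    intro y hy
    simpa using sum_le_of_le_off {y} (card_singleton y).le (by norm_num)
      (fun z _ => ownerPayoff_bc_le_hundred _ _) fun z hz =>
        largePay_le_of_forall_count_ne_four a0 a1 a2 a3 a4 y z hfour hy (by simpa using hz)
  refine (sum_le_of_le_off _ card_le_five (by norm_num) (fun y _ => sum_ownerPayoff_bc_le _ _)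
    hinner).trans ?_
  norm_num

lemma sum_mediumPay_const (v : Fin 100) :
    ∑ x, ∑ z, ownerPayoff bcu bcOwner 1 (bcProfile x v z) = 490000 := by
  have hinner : ∀ x, ∑ z, ownerPayoff bcu bcOwner 1 (bcProfile x v z) =
      if x = v ∨ x + 1 = v then 0 else 5000 := by
    intro x
    simp only [mediumPay_bcProfile]
    split_ifs with hx
    · rcases hx with h | h <;> simp [h]
    · simp only [not_or] at hx
      rw [sum_eq_of_eq_off {x, v} 50 fun z hz => by simp_all [not_or]]
      simp [hx.1, hx.2, sum_pair hx.1, card_pair hx.1]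
      norm_num
  have hv : v - 1 ≠ v := by simp
  rw [sum_congr rfl fun x _ => hinner x,
    sum_eq_of_eq_off {v, v - 1} 5000 fun x hx => by simp_all [not_or, ← eq_sub_iff_add_eq]]
  simp [sum_pair hv.symm, card_pair hv.symm]
  norm_num

lemma mediumPay_le_of_not_const (x v5 v6 v7 v8 z : Fin 100)
    (hne : ¬(v5 = v6 ∧ v6 = v7 ∧ v7 = v8)) (hx : x ∉ ({v5, v6, v7, v8} : Finset (Fin 100)))
    (hz : z ≠ x) :
    ownerPayoff bcu bcOwner 1 ![x, x, x, x, x + 1, v5, v6, v7, v8, z] ≤ 300 / 7 := by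
  simp only [mem_insert, mem_singleton, not_or] at hx
  obtain ⟨h5, h6, h7, h8⟩ := hx
  have hcx : count ![x, x, x, x, x + 1, v5, v6, v7, v8, z] x = 4 := by
    simp [count_vec, Ne.symm h5, Ne.symm h6, Ne.symm h7, Ne.symm h8, hz]
  have hloser : ∃ i ∈ ({i | bcOwner i = 1} : Finset (Fin 10)),
      i ∉ winners ![x, x, x, x, x + 1, v5, v6, v7, v8, z] := by
    by_contra! hall
    have hc : ∀ i : Fin 10, bcOwner i = 1 →
        count ![x, x, x, x, x + 1, v5, v6, v7, v8, z] (![x, x, x, x, x + 1, v5, v6, v7, v8, z] i)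
          = 4 :=
      fun i hi => mem_winners.1 (hall i (by simpa using hi))
    obtain h | h | h : v5 ≠ v6 ∨ v6 ≠ v7 ∨ v7 ≠ v8 := by tauto
    · exact count_ne_four_of_three h (Ne.symm h5) (Ne.symm h6) (hc 5 rfl) (hc 6 rfl) hcx
    · exact count_ne_four_of_three h (Ne.symm h6) (Ne.symm h7) (hc 6 rfl) (hc 7 rfl) hcx
    · exact count_ne_four_of_three h (Ne.symm h7) (Ne.symm h8) (hc 7 rfl) (hc 8 rfl) hcx
  obtain ⟨i, hi, hiW⟩ := hloser
  refine sum_bcu_le_of_rival _ _ x hcx (fun i hi => ?_) ?_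
  · rw [bcOwner_filter_one] at hi
    fin_cases hi <;> simp [Ne.symm h5, Ne.symm h6, Ne.symm h7, Ne.symm h8]
  have hlt := card_lt_card ((ssubset_iff_of_subset inter_subset_left).2
    ⟨i, hi, fun h => hiW (mem_inter.1 h).2⟩)
  rw [bcOwner_filter_one] at hlt ⊢
  exact Nat.le_of_lt_succ (by simpa using hlt)

lemma sum_mediumPay_le (v5 v6 v7 v8 : Fin 100) :
    ∑ x, ∑ z, ownerPayoff bcu bcOwner 1 ![x, x, x, x, x + 1, v5, v6, v7, v8, z] ≤ 490000 := by
  by_cases hconst : v5 = v6 ∧ v6 = v7 ∧ v7 = v8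
  · obtain ⟨rfl, rfl, rfl⟩ := hconst
    exact (sum_mediumPay_const v5).le
  have hinner : ∀ x ∉ ({v5, v6, v7, v8} : Finset (Fin 100)),
      ∑ z, ownerPayoff bcu bcOwner 1 ![x, x, x, x, x + 1, v5, v6, v7, v8, z] ≤
        1 * 100 + (100 - 1) * (300 / 7) := by
    intro x hx
    simpa using sum_le_of_le_off {x} (card_singleton x).le (by norm_num)
      (fun z _ => ownerPayoff_bc_le_hundred _ _) fun z hz =>
        mediumPay_le_of_not_const x v5 v6 v7 v8 z hconst hx (by simpa using hz)
  refine (sum_le_of_le_off _ card_le_four (by norm_num) (fun x _ => sum_ownerPayoff_bc_le _ _)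
    hinner).trans ?_
  norm_num

end BoundedCoordination

section Equilibrium

def bcActions (x y z : Fin 100) : Fin 3 → Fin 10 → Fin 100 :=
  ![fun r => if (r : ℕ) = 4 then x + 1 else x, fun _ => y, fun _ => z]

lemma bcActions_profile (x y z : Fin 100) :
    ![largePure x, constPure y, constPure z] = fun i => diracProfile (bcActions x y z i) := by
  funext i r
  fin_cases i
  · exact (apply_ite Mixed.dirac _ _ _).symm
  all_goals rfl

lemma largePure_injective : Function.Injective largePure :=
  fun _ _ h => Mixed.dirac_injective (congrFun h 0)

lemma constPure_injective : Function.Injective constPure :=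
  fun _ _ h => Mixed.dirac_injective (congrFun h 0)

lemma Upure_bc (j : Fin 3) (x y z : Fin 100) :
    Upure bcu bcp j ![largePure x, constPure y, constPure z] =
      ownerPayoff bcu bcOwner j (bcProfile x y z) := by
  rw [bcActions_profile, Upure_diracProfile bcu bcp bcOwner bcp_eq]
  congr 1
  funext r
  fin_cases r <;> rfl

lemma Upure_bc_update_zero (M : PureMeta (fun _ : Fin 10 => Fin 100)) (y z : Fin 100) :
    Upure bcu bcp 0 ![M, constPure y, constPure z] =
      expPay (fun a => ownerPayoff bcu bcOwner 0 ![a 0, a 1, a 2, a 3, a 4, y, y, y, y, z]) M := by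
  rw [show ![M, constPure y, constPure z] =
      Function.update (fun i => diracProfile (bcActions 0 y z i)) 0 M by
    funext i; fin_cases i <;> rfl, Upure_update_diracProfile bcu bcp bcOwner bcp_eq]
  refine congrArg (expPay · M) (funext fun a => congrArg (ownerPayoff bcu bcOwner _) ?_)
  funext r
  fin_cases r <;> rfl

lemma Upure_bc_update_one (M : PureMeta (fun _ : Fin 10 => Fin 100)) (x z : Fin 100) :
    Upure bcu bcp 1 ![largePure x, M, constPure z] =
      expPay (fun a => ownerPayoff bcu bcOwner 1 ![x, x, x, x, x + 1, a 5, a 6, a 7, a 8, z])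
        M := by
  rw [show ![largePure x, M, constPure z] =
      Function.update (fun i => diracProfile (bcActions x 0 z i)) 1 M by
    rw [← bcActions_profile]; funext i; fin_cases i <;> rfl,
    Upure_update_diracProfile bcu bcp bcOwner bcp_eq]
  refine congrArg (expPay · M) (funext fun a => congrArg (ownerPayoff bcu bcOwner _) ?_)
  funext r
  fin_cases r <;> rfl

lemma Upure_bc_update_two (M : PureMeta (fun _ : Fin 10 => Fin 100)) (x y : Fin 100) :
    Upure bcu bcp 2 ![largePure x, constPure y, M] =
      expPay (fun a => ownerPayoff bcu bcOwner 2 (bcProfile x y (a 9))) M := by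
  rw [show ![largePure x, constPure y, M] =
      Function.update (fun i => diracProfile (bcActions x y 0 i)) 2 M by
    rw [← bcActions_profile]; funext i; fin_cases i <;> rfl,
    Upure_update_diracProfile bcu bcp bcOwner bcp_eq]
  refine congrArg (expPay · M) (funext fun a => congrArg (ownerPayoff bcu bcOwner _) ?_)
  funext r
  fin_cases r <;> rfl

lemma U_bc (Γ : Fin 3 → FinDist (PureMeta (fun _ : Fin 10 => Fin 100)))
    (hL : ∀ x : Fin 100, (Γ 0).w (largePure x) = 1 / 100)
    (hM : ∀ y : Fin 100, (Γ 1).w (constPure y) = 1 / 100)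
    (hS : ∀ z : Fin 100, (Γ 2).w (constPure z) = 1 / 100) (j : Fin 3) :
    U bcu bcp Γ j = (∑ x, ∑ y, ∑ z, ownerPayoff bcu bcOwner j (bcProfile x y z)) / 100 ^ 3 := by
  rw [U_eq_expect, (Γ 0).expect_uniform largePure_injective (by simpa using hL)]
  simp only [(Γ 1).expect_uniform constPure_injective (by simpa using hM),
    (Γ 2).expect_uniform constPure_injective (by simpa using hS), Upure_bc]
  simp [sum_div, div_div]
  norm_num

lemma sum_bcp (j : Fin 3) : ∑ i, bcp i j = ![5, 4, 1] j := by
  simp only [bcp_eq, sum_boole]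
  fin_cases j <;> simp [bcOwner_filter_zero, bcOwner_filter_one, bcOwner_filter_two]

lemma U_bc_zero (Γ : Fin 3 → FinDist (PureMeta (fun _ : Fin 10 => Fin 100)))
    (hL : ∀ x : Fin 100, (Γ 0).w (largePure x) = 1 / 100)
    (hM : ∀ y : Fin 100, (Γ 1).w (constPure y) = 1 / 100)
    (hS : ∀ z : Fin 100, (Γ 2).w (constPure z) = 1 / 100) :
    U bcu bcp Γ 0 = 49.99 := by
  rw [U_bc Γ hL hM hS]
  simp only [bcProfile]
  rw [sum_congr rfl fun x _ => sum_largePay_four_one x (x + 1) (by simp), sum_const, card_univ,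
    Fintype.card_fin, nsmul_eq_mul]
  norm_num

lemma U_bc_one (Γ : Fin 3 → FinDist (PureMeta (fun _ : Fin 10 => Fin 100)))
    (hL : ∀ x : Fin 100, (Γ 0).w (largePure x) = 1 / 100)
    (hM : ∀ y : Fin 100, (Γ 1).w (constPure y) = 1 / 100)
    (hS : ∀ z : Fin 100, (Γ 2).w (constPure z) = 1 / 100) :
    U bcu bcp Γ 1 = 49 := by
  rw [U_bc Γ hL hM hS, sum_comm, sum_congr rfl fun y _ => sum_mediumPay_const y, sum_const,
    card_univ, Fintype.card_fin, nsmul_eq_mul]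
  norm_num

lemma U_bc_two (Γ : Fin 3 → FinDist (PureMeta (fun _ : Fin 10 => Fin 100)))
    (hL : ∀ x : Fin 100, (Γ 0).w (largePure x) = 1 / 100)
    (hM : ∀ y : Fin 100, (Γ 1).w (constPure y) = 1 / 100)
    (hS : ∀ z : Fin 100, (Γ 2).w (constPure z) = 1 / 100) :
    U bcu bcp Γ 2 = 0 := by
  simp [U_bc Γ hL hM hS, smallPay_bcProfile]

lemma U_bc_update_zero_le (Γ : Fin 3 → FinDist (PureMeta (fun _ : Fin 10 => Fin 100)))
    (hM : ∀ y : Fin 100, (Γ 1).w (constPure y) = 1 / 100)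
    (hS : ∀ z : Fin 100, (Γ 2).w (constPure z) = 1 / 100)
    (M : PureMeta (fun _ : Fin 10 => Fin 100)) :
    U bcu bcp (Function.update Γ 0 (FinDist.pure M)) 0 ≤ 49.99 := by
  rw [U_eq_expect]
  simp only [Function.update_self, ne_eq, Fin.reduceEq, not_false_eq_true, Function.update_of_ne,
    FinDist.expect_pure, (Γ 1).expect_uniform constPure_injective (by simpa using hM),
    (Γ 2).expect_uniform constPure_injective (by simpa using hS), Upure_bc_update_zero]
  have hsum : ∑ y, ∑ z, expPay (fun a => ownerPayoff bcu bcOwner 0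
      ![a 0, a 1, a 2, a 3, a 4, y, y, y, y, z]) M ≤ 499900 := by
    simp only [sum_expPay]
    exact expPay_le (fun a => sum_largePay_le _ _ _ _ _) M
  simp only [← sum_div, Fintype.card_fin, Nat.cast_ofNat, div_div]
  rw [div_le_iff₀ (by norm_num)]
  linarith

lemma U_bc_update_one_le (Γ : Fin 3 → FinDist (PureMeta (fun _ : Fin 10 => Fin 100)))
    (hL : ∀ x : Fin 100, (Γ 0).w (largePure x) = 1 / 100)
    (hS : ∀ z : Fin 100, (Γ 2).w (constPure z) = 1 / 100)
    (M : PureMeta (fun _ : Fin 10 => Fin 100)) :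
    U bcu bcp (Function.update Γ 1 (FinDist.pure M)) 1 ≤ 49 := by
  rw [U_eq_expect]
  simp only [Function.update_self, ne_eq, Fin.reduceEq, not_false_eq_true, Function.update_of_ne,
    FinDist.expect_pure, (Γ 0).expect_uniform largePure_injective (by simpa using hL),
    (Γ 2).expect_uniform constPure_injective (by simpa using hS), Upure_bc_update_one]
  have hsum : ∑ x, ∑ z, expPay (fun a => ownerPayoff bcu bcOwner 1
      ![x, x, x, x, x + 1, a 5, a 6, a 7, a 8, z]) M ≤ 490000 := by
    simp only [sum_expPay]
    exact expPay_le (fun a => sum_mediumPay_le _ _ _ _) M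
  simp only [← sum_div, Fintype.card_fin, Nat.cast_ofNat, div_div]
  rw [div_le_iff₀ (by norm_num)]
  linarith

lemma U_bc_update_two_le (Γ : Fin 3 → FinDist (PureMeta (fun _ : Fin 10 => Fin 100)))
    (hL : ∀ x : Fin 100, (Γ 0).w (largePure x) = 1 / 100)
    (hM : ∀ y : Fin 100, (Γ 1).w (constPure y) = 1 / 100)
    (M : PureMeta (fun _ : Fin 10 => Fin 100)) :
    U bcu bcp (Function.update Γ 2 (FinDist.pure M)) 2 ≤ 0 := by
  rw [U_eq_expect]
  simp [FinDist.expect_pure, (Γ 0).expect_uniform largePure_injective (by simpa using hL),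
    (Γ 1).expect_uniform constPure_injective (by simpa using hM), Upure_bc_update_two,
    smallPay_bcProfile, expPay_const]

end Equilibrium

/-- In the bounded-coordination meta-game, the profile in which the large LLM mixes uniformly
over `largePure x`, the medium LLM uniformly over `constPure y` and the small LLM uniformly over
`constPure z` is a Nash equilibrium whose average utilities are `9.998`, `12.25` and `0`; in
particular the medium LLM obtains the highest average utility despite not having the largest
market share. -/
theorem bc_medium_llm_best
    (Γ : Fin 3 → FinDist (PureMeta (fun _ : Fin 10 => Fin 100)))
    (hL : ∀ x : Fin 100, (Γ 0).w (largePure x) = 1 / 100)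
    (hM : ∀ y : Fin 100, (Γ 1).w (constPure y) = 1 / 100)
    (hS : ∀ z : Fin 100, (Γ 2).w (constPure z) = 1 / 100) :
    Nash bcu bcp Γ ∧
    avgU bcu bcp Γ 0 = 9.998 ∧
    avgU bcu bcp Γ 1 = 12.25 ∧
    avgU bcu bcp Γ 2 = 0 ∧
    avgU bcu bcp Γ 0 < avgU bcu bcp Γ 1 ∧
    avgU bcu bcp Γ 2 < avgU bcu bcp Γ 1 := by
  have hU0 := U_bc_zero Γ hL hM hS
  have hU1 := U_bc_one Γ hL hM hS
  have hU2 := U_bc_two Γ hL hM hS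
  have hA0 : avgU bcu bcp Γ 0 = 9.998 := by
    rw [avgU, hU0, sum_bcp]
    norm_num
  have hA1 : avgU bcu bcp Γ 1 = 12.25 := by
    rw [avgU, hU1, sum_bcp]
    norm_num
  have hA2 : avgU bcu bcp Γ 2 = 0 := by rw [avgU, hU2, zero_div]
  refine ⟨nash_of_forall_pure _ _ _ fun j M => ?_, hA0, hA1, hA2, by norm_num [hA0, hA1],
    by norm_num [hA1, hA2]⟩
  fin_cases j
  · exact hU0 ▸ U_bc_update_zero_le Γ hM hS M
  · exact hU1 ▸ U_bc_update_one_le Γ hL hS M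
  · exact hU2 ▸ U_bc_update_two_le Γ hL hM M

end MetaGame
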